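/- Consider an ODE-LTI ṗ = Ãp + Gq, z = C̃p + D̃q and its weakly unobservable subspace V (the set of initial states p₀ for which some state/input pair gives identically zero output a.e.). Then V is the largest subspace of ℝʳ for which there exists a linear map F̃ : ℝʳ → ℝˢ such that (Ã + GF̃)V ⊆ V and (C̃ + D̃F̃)V = 0. -/

import Mathlib

open MeasureTheory Set Filter Matrix

def IsNiceInterval (I : Set ℝ) : Prop :=
  (∃ a b, I = Set.Icc a b) ∨ (∃ a, I = Set.Ici a) ∨ (∃ a, I = Set.Iic a) ∨ I = Set.univ

def IsStateTraj {r : ℕ} {σ : Type} [Fintype σ] (Al : Matrix (Fin r) (Fin r) ℝ)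
    (Bl : Matrix (Fin r) σ ℝ)
    (I : Set ℝ) (p : ℝ → Fin r → ℝ) (g : ℝ → σ → ℝ) : Prop :=
  LocallyIntegrableOn p I ∧ LocallyIntegrableOn g I ∧
  ∀ t₀ ∈ I, ∀ t ∈ I, t₀ ≤ t →
    p t = p t₀ + ∫ τ in t₀..t, (Al.mulVec (p τ) + Bl.mulVec (g τ))

/-- The set of weakly unobservable initial states of the ODE-LTI `(Ã, G, C̃, D̃)`:
states from which some state/input trajectory produces identically zero output a.e. -/
def WeaklyUnobservable {r s p : ℕ} (At : Matrix (Fin r) (Fin r) ℝ)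
    (G : Matrix (Fin r) (Fin s) ℝ) (Ct : Matrix (Fin p) (Fin r) ℝ)
    (Dt : Matrix (Fin p) (Fin s) ℝ) : Set (Fin r → ℝ) :=
  {p₀ | ∃ pf qf, IsStateTraj At G (Set.Ici 0) pf qf ∧ pf 0 = p₀ ∧
    ∀ᵐ t ∂(volume.restrict (Set.Ici (0 : ℝ))),
      Ct.mulVec (pf t) + Dt.mulVec (qf t) = 0}

/-! If `F̃` is a friend of a subspace `W`, every `w ∈ W` is weakly unobservable: the closed loop
`ṗ = (Ã + G F̃) p`, `p 0 = w`, stays in `W`, and the input `q = F̃ p` keeps the output zero.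

Conversely, let `p, q` be a zero-output trajectory from `p₀ ∈ V`. Every `p t` is again weakly
unobservable (shift time), so at almost every `t > 0` the derivative `Ã p t + G q t`, a limit of
difference quotients of points of the closed subspace `V`, lies in `V`, while
`C̃ p t + D̃ q t = 0`. The states `x` admitting an input `q` with `Ã x + G q ∈ V` and
`C̃ x + D̃ q = 0` form a closed subspace, which therefore contains `p₀` by right continuity of `p`.
Choosing such inputs linearly along a basis of `V` yields a friend of `V`. -/

open Topology

section Calculus

variable {E : Type*} [NormedAddCommGroup E]

theorem MeasureTheory.LocallyIntegrableOn.comp_add_right {f : ℝ → E} {s : Set ℝ}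
    (hf : LocallyIntegrableOn f s) (c : ℝ) :
    LocallyIntegrableOn (fun t => f (t + c)) ((· + c) ⁻¹' s) := by
  intro x hx
  obtain ⟨U, hU, hfU⟩ := hf (x + c) hx
  exact ⟨(· + c) ⁻¹' U,
    (continuous_add_const c).continuousWithinAt.tendsto_nhdsWithin (mapsTo_preimage _ s) hU,
    ((measurePreserving_add_right volume c).integrableOn_comp_preimage
      (measurableEmbedding_addRight c)).2 hfU⟩

theorem ae_restrict_comp_add_right {P : ℝ → Prop} {s : Set ℝ}
    (h : ∀ᵐ t ∂volume.restrict s, P t) (c : ℝ) :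
    ∀ᵐ t ∂volume.restrict ((· + c) ⁻¹' s), P (t + c) :=
  ((measurePreserving_add_right volume c).restrict_preimage_emb
    (measurableEmbedding_addRight c) s).quasiMeasurePreserving.ae h

theorem MeasureTheory.LocallyIntegrableOn.locallyIntegrable_indicator {f : ℝ → E} {s : Set ℝ}
    (hf : LocallyIntegrableOn f s) (hs : IsClosed s) : LocallyIntegrable (s.indicator f) := by
  rw [locallyIntegrableOn_iff_locallyIntegrable_restrict hs] at hf
  intro x
  obtain ⟨U, hU, hfU⟩ := hf x
  refine ⟨U, hU, ?_⟩
  rwa [IntegrableOn, integrable_indicator_iff hs.measurableSet, IntegrableOn,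
    Measure.restrict_comm hs.measurableSet]

theorem MeasureTheory.LocallyIntegrable.intervalIntegrable {f : ℝ → E}
    (hf : LocallyIntegrable f) (a b : ℝ) : IntervalIntegrable f volume a b :=
  intervalIntegrable_iff.2 ((hf.integrableOn_isCompact isCompact_uIcc).mono_set uIoc_subset_uIcc)

theorem HasDerivAt.mem_of_eventually_mem [NormedSpace ℝ E] {f : ℝ → E} {f' : E} {x : ℝ}
    {V : Submodule ℝ E}
    (hV : IsClosed (V : Set E)) (hf : HasDerivAt f f' x) (hfV : ∀ᶠ y in 𝓝 x, f y ∈ V) :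
    f' ∈ V := by
  refine hV.mem_of_tendsto (hasDerivAt_iff_tendsto_slope.1 hf) ?_
  filter_upwards [nhdsWithin_le_nhds hfV] with y hy
  rw [slope_def_module]
  exact V.smul_mem _ (V.sub_mem hy hfV.self_of_nhds)

theorem ContinuousWithinAt.mem_of_ae_mem {X : Type*} [TopologicalSpace X] {f : ℝ → X}
    {K : Set X} {a : ℝ} (hK : IsClosed K) (hf : ContinuousWithinAt f (Ioi a) a)
    (hfK : ∀ᵐ t ∂volume.restrict (Ioi a), f t ∈ K) : f a ∈ K := by
  by_contra ha
  have hbad : {t | f t ∉ K} ∩ Ioi a ∈ 𝓝[>] a :=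
    inter_mem (hf (hK.isOpen_compl.mem_nhds ha)) self_mem_nhdsWithin
  obtain ⟨b, hab, hsub⟩ := mem_nhdsGT_iff_exists_Ioo_subset.1 hbad
  have hnull : volume ({t | f t ∉ K} ∩ Ioi a) = 0 := by
    rwa [ae_iff, Measure.restrict_apply' measurableSet_Ioi] at hfK
  exact (Measure.measure_Ioo_pos volume |>.2 hab).ne' (measure_mono_null hsub hnull)

section Primitive

variable [NormedSpace ℝ E] {f h : ℝ → E} {a : ℝ}

theorem eqOn_add_integral_indicator (hf : ∀ t ∈ Ici a, f t = f a + ∫ τ in a..t, h τ) :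
    EqOn f (fun t => f a + ∫ τ in a..t, (Ici a).indicator h τ) (Ici a) := by
  intro t ht
  rw [hf t ht, intervalIntegral.integral_congr fun τ hτ => ?_]
  rw [uIcc_of_le ht] at hτ
  exact (indicator_of_mem hτ.1 h).symm

theorem continuousOn_Ici_of_eq_add_integral [CompleteSpace E]
    (hh : LocallyIntegrableOn h (Ici a))
    (hf : ∀ t ∈ Ici a, f t = f a + ∫ τ in a..t, h τ) : ContinuousOn f (Ici a) :=
  (continuous_const.add (intervalIntegral.continuous_primitive
    (hh.locallyIntegrable_indicator isClosed_Ici).intervalIntegrable a)).continuousOn.congr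
    (eqOn_add_integral_indicator hf)

theorem ae_hasDerivAt_of_eq_add_integral [CompleteSpace E]
    (hh : LocallyIntegrableOn h (Ici a))
    (hf : ∀ t ∈ Ici a, f t = f a + ∫ τ in a..t, h τ) :
    ∀ᵐ t ∂volume.restrict (Ioi a), HasDerivAt f (h t) t := by
  filter_upwards [ae_restrict_of_ae
      (LocallyIntegrable.ae_hasDerivAt_integral (hh.locallyIntegrable_indicator isClosed_Ici)),
    ae_restrict_mem measurableSet_Ioi] with t ht (hta : a < t)
  have hprim := (ht a).const_add (f a)
  rw [indicator_of_mem (mem_Ici.2 hta.le)] at hprim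
  exact hprim.congr_of_eventuallyEq
    ((eqOn_add_integral_indicator hf).eventuallyEq_of_mem (Ici_mem_nhds hta))

end Primitive

theorem ContinuousLinearMap.exists_hasDerivAt_apply {F : Type*} [NormedAddCommGroup F]
    [NormedSpace ℝ F] [CompleteSpace F] (L : F →L[ℝ] F) (x₀ : F) :
    ∃ x : ℝ → F, x 0 = x₀ ∧ ∀ t, HasDerivAt x (L (x t)) t :=
  ⟨fun t => NormedSpace.exp (t • L) x₀, by simp, fun t =>
    (ContinuousLinearMap.apply ℝ F x₀).hasFDerivAt.comp_hasDerivAt t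
      (hasDerivAt_exp_smul_const' L t)⟩

theorem ContinuousLinearMap.exists_hasDerivAt_apply_forall_mem [NormedSpace ℝ E]
    (L : E →L[ℝ] E) (W : Submodule ℝ E) [CompleteSpace W] (hL : ∀ w ∈ W, L w ∈ W) {w₀ : E}
    (hw₀ : w₀ ∈ W) :
    ∃ x : ℝ → E, x 0 = w₀ ∧ (∀ t, x t ∈ W) ∧ ∀ t, HasDerivAt x (L (x t)) t := by
  obtain ⟨x, hx0, hx⟩ := ContinuousLinearMap.exists_hasDerivAt_apply
    ((L.comp W.subtypeL).codRestrict W fun w => hL w w.2) ⟨w₀, hw₀⟩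
  exact ⟨fun t => x t, by simp [hx0], fun t => (x t).2,
    fun t => W.subtypeL.hasFDerivAt.comp_hasDerivAt t (hx t)⟩

end Calculus

section StateTraj

variable {r : ℕ} {σ : Type} [Fintype σ] {Al : Matrix (Fin r) (Fin r) ℝ}
  {Bl : Matrix (Fin r) σ ℝ} {I : Set ℝ} {p : ℝ → Fin r → ℝ} {g : ℝ → σ → ℝ}

theorem isStateTraj_zero : IsStateTraj Al Bl I 0 0 :=
  ⟨locallyIntegrableOn_zero, locallyIntegrableOn_zero, by simp⟩

theorem IsStateTraj.mono (hpg : IsStateTraj Al Bl I p g) {J : Set ℝ} (hJ : J ⊆ I) :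
    IsStateTraj Al Bl J p g :=
  ⟨hpg.1.mono_set hJ, hpg.2.1.mono_set hJ, fun t₀ ht₀ t ht => hpg.2.2 t₀ (hJ ht₀) t (hJ ht)⟩

theorem IsStateTraj.comp_add_right (hpg : IsStateTraj Al Bl I p g) (c : ℝ) :
    IsStateTraj Al Bl ((· + c) ⁻¹' I) (fun t => p (t + c)) (fun t => g (t + c)) := by
  refine ⟨hpg.1.comp_add_right c, hpg.2.1.comp_add_right c, fun t₀ ht₀ t ht hle => ?_⟩
  dsimp only
  rw [hpg.2.2 _ ht₀ _ ht (by linarith),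
    intervalIntegral.integral_comp_add_right (fun τ => Al *ᵥ p τ + Bl *ᵥ g τ)]

theorem IsStateTraj.locallyIntegrableOn_integrand (hpg : IsStateTraj Al Bl I p g) :
    LocallyIntegrableOn (fun τ => Al *ᵥ p τ + Bl *ᵥ g τ) I :=
  (Al.mulVecLin.toContinuousLinearMap.locallyIntegrableOn_comp hpg.1).add
    (Bl.mulVecLin.toContinuousLinearMap.locallyIntegrableOn_comp hpg.2.1)

theorem IsStateTraj.intervalIntegrable_integrand [I.OrdConnected] (hpg : IsStateTraj Al Bl I p g)
    {t₀ t : ℝ} (ht₀ : t₀ ∈ I) (ht : t ∈ I) :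
    IntervalIntegrable (fun τ => Al *ᵥ p τ + Bl *ᵥ g τ) volume t₀ t :=
  (hpg.locallyIntegrableOn_integrand.integrableOn_compact_subset
    (Set.OrdConnected.uIcc_subset ‹_› ht₀ ht) isCompact_uIcc).intervalIntegrable

theorem IsStateTraj.add [I.OrdConnected] {p' : ℝ → Fin r → ℝ} {g' : ℝ → σ → ℝ}
    (hpg : IsStateTraj Al Bl I p g) (hpg' : IsStateTraj Al Bl I p' g') :
    IsStateTraj Al Bl I (p + p') (g + g') := by
  refine ⟨hpg.1.add hpg'.1, hpg.2.1.add hpg'.2.1, fun t₀ ht₀ t ht hle => ?_⟩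
  have hintegrand : (fun τ => Al *ᵥ (p + p') τ + Bl *ᵥ (g + g') τ)
      = fun τ => (Al *ᵥ p τ + Bl *ᵥ g τ) + (Al *ᵥ p' τ + Bl *ᵥ g' τ) := by
    funext τ
    simp only [Pi.add_apply, mulVec_add]
    abel
  rw [hintegrand, intervalIntegral.integral_add (hpg.intervalIntegrable_integrand ht₀ ht)
    (hpg'.intervalIntegrable_integrand ht₀ ht), Pi.add_apply, Pi.add_apply, hpg.2.2 t₀ ht₀ t ht hle,
    hpg'.2.2 t₀ ht₀ t ht hle]
  abel

theorem IsStateTraj.smul (hpg : IsStateTraj Al Bl I p g) (c : ℝ) :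
    IsStateTraj Al Bl I (c • p) (c • g) := by
  refine ⟨hpg.1.smul c, hpg.2.1.smul c, fun t₀ ht₀ t ht hle => ?_⟩
  simp only [Pi.smul_apply, mulVec_smul, ← smul_add, intervalIntegral.integral_smul,
    hpg.2.2 t₀ ht₀ t ht hle]

end StateTraj

section OutputNulling

theorem Submodule.exists_linearMap_prod_mem_of_le_map_fst {K E U : Type*} [Field K]
    [AddCommGroup E] [Module K E] [AddCommGroup U] [Module K U] {P : Submodule K (E × U)}
    {V : Submodule K E}
    (hV : V ≤ P.map (LinearMap.fst K E U)) : ∃ F : E →ₗ[K] U, ∀ x ∈ V, (x, F x) ∈ P := by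
  let B := Module.Basis.ofVectorSpace K V
  choose u hu using fun i => Submodule.mem_map.1 (hV (B i).2)
  obtain ⟨F, hF⟩ := (B.constr K fun i => (u i).2).exists_extend
  have hgraph : (⊤ : Submodule K V) ≤ P.comap (V.subtype.prod (F ∘ₗ V.subtype)) := by
    rw [← B.span_eq, Submodule.span_le]
    rintro _ ⟨i, rfl⟩
    have hFB : F (B i) = (u i).2 := by simpa using LinearMap.congr_fun hF (B i)
    show ((B i : E), F (B i)) ∈ P
    rw [hFB, ← (hu i).2]
    exact (hu i).1
  exact ⟨F, fun x hx => hgraph (Submodule.mem_top (x := ⟨x, hx⟩))⟩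

variable {n m l : Type*} [Fintype n] [Fintype m]

def outputNullingPairs (At : Matrix n n ℝ) (G : Matrix n m ℝ) (Ct : Matrix l n ℝ)
    (Dt : Matrix l m ℝ) (V : Submodule ℝ (n → ℝ)) : Submodule ℝ ((n → ℝ) × (m → ℝ)) :=
  (V.prod ⊥).comap ((At.mulVecLin.coprod G.mulVecLin).prod (Ct.mulVecLin.coprod Dt.mulVecLin))

variable {At : Matrix n n ℝ} {G : Matrix n m ℝ} {Ct : Matrix l n ℝ} {Dt : Matrix l m ℝ}
  {V : Submodule ℝ (n → ℝ)}

@[simp]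
theorem mem_outputNullingPairs {xq : (n → ℝ) × (m → ℝ)} :
    xq ∈ outputNullingPairs At G Ct Dt V ↔ At *ᵥ xq.1 + G *ᵥ xq.2 ∈ V ∧
      Ct *ᵥ xq.1 + Dt *ᵥ xq.2 = 0 := by
  simp [outputNullingPairs]

theorem exists_friend_of_le_map_fst_outputNullingPairs [DecidableEq n]
    (hV : V ≤ (outputNullingPairs At G Ct Dt V).map (LinearMap.fst ℝ _ _)) :
    ∃ F : Matrix m n ℝ,
      (∀ v ∈ V, (At + G * F) *ᵥ v ∈ V) ∧ ∀ v ∈ V, (Ct + Dt * F) *ᵥ v = 0 := by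
  obtain ⟨F, hF⟩ := Submodule.exists_linearMap_prod_mem_of_le_map_fst hV
  have hFV : ∀ v ∈ V, (At + G * LinearMap.toMatrix' F) *ᵥ v ∈ V ∧
      (Ct + Dt * LinearMap.toMatrix' F) *ᵥ v = 0 := fun v hv => by
    simpa [add_mulVec, ← mulVec_mulVec] using mem_outputNullingPairs.1 (hF v hv)
  exact ⟨_, fun v hv => (hFV v hv).1, fun v hv => (hFV v hv).2⟩

end OutputNulling

section WeaklyUnobservable

variable {r s p : ℕ} {At : Matrix (Fin r) (Fin r) ℝ} {G : Matrix (Fin r) (Fin s) ℝ}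
  {Ct : Matrix (Fin p) (Fin r) ℝ} {Dt : Matrix (Fin p) (Fin s) ℝ}

variable (At G Ct Dt) in
def weaklyUnobservableSubmodule : Submodule ℝ (Fin r → ℝ) where
  carrier := WeaklyUnobservable At G Ct Dt
  zero_mem' := ⟨0, 0, isStateTraj_zero, rfl, ae_of_all _ fun _ => by simp⟩
  add_mem' := by
    rintro _ _ ⟨x, q, hxq, rfl, hout⟩ ⟨x', q', hxq', rfl, hout'⟩
    refine ⟨x + x', q + q', hxq.add hxq', rfl, ?_⟩
    filter_upwards [hout, hout'] with t ht ht'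
    simp only [Pi.add_apply, mulVec_add]
    rw [add_add_add_comm, ht, ht', add_zero]
  smul_mem' := by
    rintro c _ ⟨x, q, hxq, rfl, hout⟩
    refine ⟨c • x, c • q, hxq.smul c, rfl, ?_⟩
    filter_upwards [hout] with t ht
    simp only [Pi.smul_apply, mulVec_smul, ← smul_add, ht, smul_zero]

theorem IsStateTraj.mem_weaklyUnobservable {x : ℝ → Fin r → ℝ} {q : ℝ → Fin s → ℝ}
    (hxq : IsStateTraj At G (Ici 0) x q)
    (hout : ∀ᵐ t ∂volume.restrict (Ici 0), Ct *ᵥ x t + Dt *ᵥ q t = 0) {c : ℝ} (hc : 0 ≤ c) :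
    x c ∈ WeaklyUnobservable At G Ct Dt := by
  have hshift : Ici 0 ⊆ (· + c) ⁻¹' Ici 0 := fun t (ht : 0 ≤ t) => add_nonneg ht hc
  exact ⟨_, _, (hxq.comp_add_right c).mono hshift, congrArg x (zero_add c),
    ae_restrict_of_ae_restrict_of_subset hshift (ae_restrict_comp_add_right hout c)⟩

theorem weaklyUnobservableSubmodule_le_map_fst_outputNullingPairs :
    weaklyUnobservableSubmodule At G Ct Dt ≤
      (outputNullingPairs At G Ct Dt (weaklyUnobservableSubmodule At G Ct Dt)).map
        (LinearMap.fst ℝ _ _) := by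
  rintro _ ⟨x, q, hxq, rfl, hout⟩
  have hint : ∀ t ∈ Ici 0, x t = x 0 + ∫ τ in 0..t, At *ᵥ x τ + G *ᵥ q τ :=
    fun t ht => hxq.2.2 0 self_mem_Ici t ht ht
  have hcont := continuousOn_Ici_of_eq_add_integral hxq.locallyIntegrableOn_integrand hint
  refine ((hcont 0 self_mem_Ici).mono Ioi_subset_Ici_self).mem_of_ae_mem
    (Submodule.closed_of_finiteDimensional _) ?_
  filter_upwards [ae_hasDerivAt_of_eq_add_integral hxq.locallyIntegrableOn_integrand hint,
    ae_restrict_of_ae_restrict_of_subset Ioi_subset_Ici_self hout,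
    ae_restrict_mem measurableSet_Ioi] with t hderiv hzero (ht : 0 < t)
  have hstays : ∀ᶠ y in 𝓝 t, x y ∈ weaklyUnobservableSubmodule At G Ct Dt :=
    eventually_of_mem (Ioi_mem_nhds ht) fun y hy => hxq.mem_weaklyUnobservable hout hy.le
  exact ⟨(x t, q t), mem_outputNullingPairs.2
    ⟨hderiv.mem_of_eventually_mem (Submodule.closed_of_finiteDimensional _) hstays, hzero⟩, rfl⟩

theorem subset_weaklyUnobservable_of_friend (W : Submodule ℝ (Fin r → ℝ))
    (F : Matrix (Fin s) (Fin r) ℝ) (hinv : ∀ w ∈ W, (At + G * F) *ᵥ w ∈ W)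
    (hout : ∀ w ∈ W, (Ct + Dt * F) *ᵥ w = 0) :
    (W : Set (Fin r → ℝ)) ⊆ WeaklyUnobservable At G Ct Dt := by
  intro w₀ hw₀
  obtain ⟨x, hx0, hxW, hderiv⟩ :=
    (At + G * F).mulVecLin.toContinuousLinearMap.exists_hasDerivAt_apply_forall_mem W hinv hw₀
  replace hderiv : ∀ t, HasDerivAt x ((At + G * F) *ᵥ x t) t := hderiv
  have hcont : Continuous x := continuous_iff_continuousAt.2 fun t => (hderiv t).continuousAt
  have hclosedLoop : ∀ t, At *ᵥ x t + G *ᵥ (F *ᵥ x t) = (At + G * F) *ᵥ x t := fun t => by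
    rw [add_mulVec, ← mulVec_mulVec]
  refine ⟨x, fun t => F *ᵥ x t, ⟨hcont.locallyIntegrable.locallyIntegrableOn _,
    (continuous_const.matrix_mulVec hcont).locallyIntegrable.locallyIntegrableOn _,
    fun t₀ _ t _ _ => ?_⟩, hx0, ae_of_all _ fun t => ?_⟩
  · simp only [hclosedLoop]
    rw [intervalIntegral.integral_eq_sub_of_hasDerivAt (fun τ _ => hderiv τ)
      ((continuous_const.matrix_mulVec hcont).intervalIntegrable _ _)]
    abel
  · rw [← hout _ (hxW t), add_mulVec, ← mulVec_mulVec]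

end WeaklyUnobservable

/-- Theorem (geometric characterization): the weakly unobservable set  is the largest
subspace admitting a friend  with  and . -/
theorem weaklyUnobservable_largest_friend_subspace {r s p : ℕ}
    (At : Matrix (Fin r) (Fin r) ℝ) (G : Matrix (Fin r) (Fin s) ℝ)
    (Ct : Matrix (Fin p) (Fin r) ℝ) (Dt : Matrix (Fin p) (Fin s) ℝ) :
    ∃ V : Submodule ℝ (Fin r → ℝ),
      (V : Set (Fin r → ℝ)) = WeaklyUnobservable At G Ct Dt ∧
      (∃ F : Matrix (Fin s) (Fin r) ℝ,
        (∀ v ∈ V, (At + G * F).mulVec v ∈ V) ∧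
        (∀ v ∈ V, (Ct + Dt * F).mulVec v = 0)) ∧
      ∀ W : Submodule ℝ (Fin r → ℝ),
        (∃ F : Matrix (Fin s) (Fin r) ℝ,
          (∀ w ∈ W, (At + G * F).mulVec w ∈ W) ∧
          (∀ w ∈ W, (Ct + Dt * F).mulVec w = 0)) →
        W ≤ V :=
  ⟨weaklyUnobservableSubmodule At G Ct Dt, rfl,
    exists_friend_of_le_map_fst_outputNullingPairs
      weaklyUnobservableSubmodule_le_map_fst_outputNullingPairs,
    fun W ⟨F, hinv, hout⟩ => subset_weaklyUnobservable_of_friend W F hinv hout⟩
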